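/- arXiv:0903.1174 — 3 statements merged into one kernel-verified Lean document; each statement's English description precedes it below -/
import Mathlib

section
/- For x > 0, the inequality ln x - 1/x < ψ(x) < ln x - 1/(2x) holds, where ψ is the digamma function. -/
noncomputable def psi (x : ℝ) : ℝ := deriv (fun y => Real.log (Real.Gamma y)) x

/-!
Write `D = ψ - log`. Since `ψ (x + 1) = ψ x + 1 / x`, we get `D x - D (x + 1) = u - 1 / x` with
`u = log (1 + 1 / x)`, and the elementary inequalities `1 - e⁻ᵘ < u < sinh u` place this strictly
between the corresponding differences of `-1 / x` and `-1 / (2 x)`. Convexity of `log ∘ Γ` gives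
`log (x - 1) ≤ ψ x ≤ log x`, so `D → 0` at infinity. Finally, a function that strictly decreases
under `x ↦ x + 1` and tends to `0` at infinity is positive; apply this to `D + 1 / x` and
`-1 / (2 x) - D`.
-/
open Real Set Filter Topology

theorem pos_of_add_one_lt_of_tendsto_zero {h : ℝ → ℝ} {y : ℝ}
    (hstep : ∀ z ≥ y, h (z + 1) < h z) (hlim : Tendsto h atTop (𝓝 0)) : 0 < h y := by
  have hanti : Antitone fun n : ℕ => h (y + 1 + n) :=
    antitone_nat_of_succ_le fun n => by
      simpa [add_assoc] using (hstep (y + 1 + n) (by linarith [(n.cast_nonneg : (0 : ℝ) ≤ n)])).le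
  have hseq : Tendsto (fun n : ℕ => h (y + 1 + n)) atTop (𝓝 0) :=
    hlim.comp (tendsto_atTop_add_const_left _ _ tendsto_natCast_atTop_atTop)
  have h1 : 0 ≤ h (y + 1) := by simpa using hanti.le_of_tendsto hseq 0
  exact h1.trans_lt (hstep y le_rfl)

theorem inv_add_one_lt_log_add_one_sub_log {a : ℝ} (ha : 0 < a) :
    (a + 1)⁻¹ < log (a + 1) - log a := by
  have hu : log (a + 1) - log a ≠ 0 := (sub_pos.2 (log_lt_log ha (lt_add_one a))).ne'
  have hexp : exp (-(log (a + 1) - log a)) = 1 - (a + 1)⁻¹ := by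
    rw [exp_neg, exp_sub, exp_log (by positivity), exp_log ha]
    field_simp
    ring
  have := add_one_lt_exp (neg_ne_zero.2 hu)
  linarith

theorem log_add_one_sub_log_lt {a : ℝ} (ha : 0 < a) :
    log (a + 1) - log a < (a⁻¹ + (a + 1)⁻¹) / 2 := by
  have hu : 0 < log (a + 1) - log a := sub_pos.2 (log_lt_log ha (lt_add_one a))
  have hsinh : sinh (log (a + 1) - log a) = (a⁻¹ + (a + 1)⁻¹) / 2 := by
    rw [sinh_eq, exp_neg, exp_sub, exp_log (by positivity), exp_log ha]
    field_simp
    ring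
  exact hsinh ▸ self_lt_sinh_iff.2 hu

theorem differentiableAt_log_Gamma {x : ℝ} (hx : 0 < x) :
    DifferentiableAt ℝ (fun y => log (Gamma y)) x := by
  have hx' : ∀ m : ℕ, x ≠ -m := fun m => (neg_nonpos.2 m.cast_nonneg).trans_lt hx |>.ne'
  exact (differentiableAt_Gamma hx').log (Gamma_ne_zero hx')

theorem psi_add_one {x : ℝ} (hx : 0 < x) : psi (x + 1) = psi x + x⁻¹ := by
  unfold psi
  rw [← deriv_comp_add_const, ← deriv_log,
    ← deriv_add (differentiableAt_log_Gamma hx) (differentiableAt_log hx.ne')]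
  refine EventuallyEq.deriv_eq ?_
  filter_upwards [eventually_gt_nhds hx] with y hy
  rw [Gamma_add_one hy.ne', log_mul hy.ne' (Gamma_pos_of_pos hy).ne', add_comm]
  rfl

theorem log_Gamma_add_one_sub {x : ℝ} (hx : 0 < x) :
    (log ∘ Gamma) (x + 1) - (log ∘ Gamma) x = log x := by
  simp only [Function.comp_apply]
  rw [Gamma_add_one hx.ne', log_mul hx.ne' (Gamma_pos_of_pos hx).ne', add_sub_cancel_right]

theorem psi_le_log {x : ℝ} (hx : 0 < x) : psi x ≤ log x := by
  have h := convexOn_log_Gamma.deriv_le_slope (mem_Ioi.2 hx) (mem_Ioi.2 (by linarith))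
    (lt_add_one x) (differentiableAt_log_Gamma hx)
  rwa [slope_def_field, add_sub_cancel_left, div_one, log_Gamma_add_one_sub hx] at h

theorem log_le_psi_add_one {x : ℝ} (hx : 0 < x) : log x ≤ psi (x + 1) := by
  have h := convexOn_log_Gamma.slope_le_deriv (mem_Ioi.2 hx) (mem_Ioi.2 (by linarith))
    (lt_add_one x) (differentiableAt_log_Gamma (by linarith))
  rwa [slope_def_field, add_sub_cancel_left, div_one, log_Gamma_add_one_sub hx] at h

theorem tendsto_psi_sub_log_atTop : Tendsto (fun x => psi x - log x) atTop (𝓝 0) := by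
  have hlower : ∀ᶠ x in atTop, -(x - 1)⁻¹ ≤ psi x - log x := by
    filter_upwards [eventually_gt_atTop 1] with x hx
    have hx1 : 0 < x - 1 := sub_pos.2 hx
    have hpsi := log_le_psi_add_one hx1
    have hlog := log_add_one_sub_log_lt hx1
    have hinv : x⁻¹ < (x - 1)⁻¹ := inv_strictAnti₀ hx1 (sub_one_lt x)
    rw [sub_add_cancel] at hpsi hlog
    linarith
  have hupper : ∀ᶠ x in atTop, psi x - log x ≤ 0 := by
    filter_upwards [eventually_gt_atTop 0] with x hx
    exact sub_nonpos.2 (psi_le_log hx)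
  have hlim : Tendsto (fun x : ℝ => -(x - 1)⁻¹) atTop (𝓝 0) := by
    have hsub := tendsto_atTop_add_const_right _ (-1 : ℝ) tendsto_id
    simpa [sub_eq_add_neg] using (tendsto_inv_atTop_zero.comp hsub).neg
  exact tendsto_of_tendsto_of_tendsto_of_le_of_le' hlim tendsto_const_nhds hlower hupper

theorem log_sub_inv_lt_psi {x : ℝ} (hx : 0 < x) : log x - x⁻¹ < psi x := by
  suffices 0 < psi x - log x + x⁻¹ by linarith
  refine pos_of_add_one_lt_of_tendsto_zero (h := fun z => psi z - log z + z⁻¹) (fun z hz => ?_) ?_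
  · have hz0 : 0 < z := hx.trans_le hz
    have := inv_add_one_lt_log_add_one_sub_log hz0
    simp only [psi_add_one hz0]
    linarith
  · simpa using tendsto_psi_sub_log_atTop.add tendsto_inv_atTop_zero

theorem psi_lt_log_sub_inv_two_mul {x : ℝ} (hx : 0 < x) : psi x < log x - (2 * x)⁻¹ := by
  suffices 0 < log x - psi x - (2 * x)⁻¹ by linarith
  refine pos_of_add_one_lt_of_tendsto_zero (h := fun z => log z - psi z - (2 * z)⁻¹)
    (fun z hz => ?_) ?_
  · have hz0 : 0 < z := hx.trans_le hz
    have := log_add_one_sub_log_lt hz0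
    simp only [psi_add_one hz0, mul_inv]
    linarith
  · have h2 := tendsto_inv_atTop_zero.comp (tendsto_id.const_mul_atTop (two_pos (α := ℝ)))
    simpa using tendsto_psi_sub_log_atTop.neg.sub h2

theorem digamma_log_bounds (x : ℝ) (hx : 0 < x) :
    Real.log x - 1 / x < psi x ∧ psi x < Real.log x - 1 / (2 * x) := by
  simpa only [one_div] using ⟨log_sub_inv_lt_psi hx, psi_lt_log_sub_inv_two_mul hx⟩
end

section
/- For x > 0, the inequality 1/x + 1/(2x²) < ψ'(x) < 1/x + 1/x² holds, where ψ' is the trigamma function. -/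
/-!
Differentiating Euler's limit formula `log Γ(x) = lim (x log n + log n! - ∑_{m ≤ n} log (x + m))`
twice, termwise, gives `ψ'(x) = ∑_{n ≥ 0} 1 / (x + n)²`. Both bounds come from comparing this series
termwise with telescoping series: `1 / (y + 1)² < 1 / y - 1 / (y + 1)` gives the upper bound, and
`G y - G (y + 1) < 1 / y²` for `G y = 1 / y + 1 / (2 y²)` gives the lower one.
-/

open Real Filter Topology Set

lemma summable_one_div_add_sq (x : ℝ) : Summable fun n : ℕ => 1 / (x + n) ^ 2 := by
  refine ((Real.summable_one_div_nat_add_rpow x 2).2 one_lt_two).congr fun n => ?_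
  rw [Real.rpow_two, sq_abs, add_comm]

lemma tendsto_one_div_add_natCast (x : ℝ) : Tendsto (fun n : ℕ => 1 / (x + n)) atTop (𝓝 0) := by
  simp_rw [one_div]
  exact (tendsto_atTop_add_const_left _ x tendsto_natCast_atTop_atTop).inv_tendsto_atTop

lemma tendstoUniformlyOn_sum_range_succ {α F : Type*} [NormedAddCommGroup F] [CompleteSpace F]
    {f : ℕ → α → F} {u : ℕ → ℝ} (hu : Summable u) {s : Set α}
    (hfu : ∀ n x, x ∈ s → ‖f n x‖ ≤ u n) :
    TendstoUniformlyOn (fun N x => ∑ n ∈ Finset.range (N + 1), f n x) (fun x => ∑' n, f n x)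
      atTop s :=
  fun v hv => (tendsto_add_atTop_nat 1).eventually (tendstoUniformlyOn_tsum_nat hu hfu v hv)

section Telescoping

variable {f g : ℕ → ℝ}

lemma hasSum_sub_succ_of_antitone (hg : Antitone g) (h0 : Tendsto g atTop (𝓝 0)) :
    HasSum (fun n => g n - g (n + 1)) (g 0) := by
  rw [hasSum_iff_tendsto_nat_of_nonneg fun n => sub_nonneg.2 (hg n.le_succ)]
  simp_rw [Finset.sum_range_sub']
  simpa using tendsto_const_nhds.sub h0

lemma tsum_lt_of_lt_sub_succ (hf : Summable f) (hg : Antitone g) (h0 : Tendsto g atTop (𝓝 0))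
    (h : ∀ n, f n < g n - g (n + 1)) : ∑' n, f n < g 0 := by
  have hg_sum := hasSum_sub_succ_of_antitone hg h0
  rw [← hg_sum.tsum_eq]
  exact hf.tsum_lt_tsum (fun n => (h n).le) (h 0) hg_sum.summable

lemma lt_tsum_of_sub_succ_lt (hf : Summable f) (hg : Antitone g) (h0 : Tendsto g atTop (𝓝 0))
    (h : ∀ n, g n - g (n + 1) < f n) : g 0 < ∑' n, f n := by
  have hg_sum := hasSum_sub_succ_of_antitone hg h0
  rw [← hg_sum.tsum_eq]
  exact hg_sum.summable.tsum_lt_tsum (fun n => (h n).le) (h 0) hf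

end Telescoping

noncomputable def digammaSeries (x : ℝ) : ℝ :=
  -eulerMascheroniConstant + ∑' n : ℕ, (1 / (1 + n) - 1 / (x + n))

noncomputable def trigammaSeries (x : ℝ) : ℝ := ∑' n : ℕ, 1 / (x + n) ^ 2

lemma hasDerivAt_logGammaSeq {x : ℝ} (hx : 0 < x) (n : ℕ) :
    HasDerivAt (fun y => BohrMollerup.logGammaSeq y n)
      (log n - ∑ m ∈ Finset.range (n + 1), 1 / (x + m)) x := by
  have hlog : HasDerivAt (fun y => ∑ m ∈ Finset.range (n + 1), log (y + m))
      (∑ m ∈ Finset.range (n + 1), 1 / (x + m)) x :=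
    HasDerivAt.fun_sum fun m _ => by
      simpa using ((hasDerivAt_id x).add_const (m : ℝ)).log (by positivity)
  have := (((hasDerivAt_id x).mul_const (log n)).add_const (log n.factorial)).fun_sub hlog
  simpa [BohrMollerup.logGammaSeq] using this

lemma abs_one_div_one_add_sub_one_div_add_le {a b y : ℝ} (ha : 0 < a) (hay : a ≤ y) (hyb : y ≤ b)
    (m : ℕ) : |1 / (1 + m) - 1 / (y + m)| ≤ (b + 1) * ((a + 1) / a * (1 / (1 + m) ^ 2)) := by
  have hm : (0 : ℝ) ≤ m := m.cast_nonneg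
  have hy : 0 < y + m := by linarith
  have h1 : |y - 1| ≤ b + 1 := by rw [abs_le]; constructor <;> linarith
  have h2 : 1 / ((1 + m) * (y + m)) ≤ (a + 1) / a * (1 / (1 + m) ^ 2) := by
    have : a * (1 + m) ≤ (a + 1) * (y + m) := by nlinarith
    rw [div_mul_div_comm, mul_one, div_le_div_iff₀ (by positivity) (by positivity)]
    nlinarith [mul_le_mul_of_nonneg_left this (by positivity : (0 : ℝ) ≤ 1 + m)]
  calc |1 / (1 + m) - 1 / (y + m)| = |y - 1| * (1 / ((1 + m) * (y + m))) := by
        rw [← abs_of_pos (by positivity : 0 < 1 / ((1 + m) * (y + m))), ← abs_mul]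
        congr 1
        field_simp
        ring
    _ ≤ (b + 1) * ((a + 1) / a * (1 / (1 + m) ^ 2)) := by gcongr; linarith

lemma tendsto_log_sub_sum_range_succ :
    Tendsto (fun n : ℕ => log n - ∑ m ∈ Finset.range (n + 1), 1 / (1 + (m : ℝ))) atTop
      (𝓝 (-eulerMascheroniConstant)) := by
  have h := (tendsto_harmonic_sub_log.neg).sub tendsto_one_div_add_atTop_nhds_zero_nat
  rw [sub_zero] at h
  refine h.congr fun n => ?_
  simp [harmonic, Finset.sum_range_succ, add_comm]
  ring

lemma tendstoLocallyUniformlyOn_deriv_logGammaSeq :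
    TendstoLocallyUniformlyOn
      (fun (n : ℕ) (x : ℝ) => log n - ∑ m ∈ Finset.range (n + 1), 1 / (x + m))
      digammaSeries atTop (Ioi 0) := by
  refine tendstoLocallyUniformlyOn_of_forall_exists_nhds fun (x : ℝ) (hx : 0 < x) =>
    ⟨Icc (x / 2) (2 * x), nhdsWithin_le_nhds (Icc_mem_nhds (by linarith) (by linarith)), ?_⟩
  have hsum := tendstoUniformlyOn_sum_range_succ
    (f := fun (m : ℕ) (y : ℝ) => 1 / (1 + m) - 1 / (y + m))
    (((summable_one_div_add_sq 1).mul_left _).mul_left _)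
    fun m y (hy : y ∈ Icc (x / 2) (2 * x)) =>
      abs_one_div_one_add_sub_one_div_add_le (by positivity) hy.1 hy.2 m
  refine ((tendsto_log_sub_sum_range_succ.tendstoUniformlyOn_const _).add hsum).congr ?_
  filter_upwards with n _ _
  simp only [Pi.add_apply, Finset.sum_sub_distrib]
  ring

lemma hasDerivAt_log_Gamma {x : ℝ} (hx : 0 < x) :
    HasDerivAt (fun y => log (Gamma y)) (digammaSeries x) x :=
  hasDerivAt_of_tendstoLocallyUniformlyOn isOpen_Ioi tendstoLocallyUniformlyOn_deriv_logGammaSeq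
    (Eventually.of_forall fun n _ hy => hasDerivAt_logGammaSeq hy n)
    (fun _ hy => BohrMollerup.tendsto_log_gamma hy) hx

lemma hasDerivAt_digammaSeries {x : ℝ} (hx : 0 < x) :
    HasDerivAt digammaSeries (trigammaSeries x) x := by
  obtain ⟨a, ha, hax1⟩ := exists_between (lt_min hx one_pos)
  have hpos {y : ℝ} (hy : a < y) (n : ℕ) : 0 < y + n := by
    have := n.cast_nonneg (α := ℝ); linarith
  -- On `Ioi a` the derivatives are dominated by `1 / (a + n) ^ 2`; the series vanishes at `1 > a`.
  have key := hasDerivAt_tsum_of_isPreconnected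
    (g := fun (n : ℕ) (y : ℝ) => 1 / (1 + (n : ℝ)) - 1 / (y + n))
    (g' := fun (n : ℕ) (y : ℝ) => 1 / (y + n) ^ 2) (summable_one_div_add_sq a) isOpen_Ioi
    isPreconnected_Ioi
    (fun (n : ℕ) (y : ℝ) (hy : a < y) => by
      simpa [one_div, neg_div] using
        ((hasDerivAt_id y).add_const (n : ℝ)).inv (hpos hy n).ne' |>.const_sub (1 / (1 + (n : ℝ))))
    (fun (n : ℕ) (y : ℝ) (hy : a < y) => by
      rw [Real.norm_of_nonneg (by positivity)]
      gcongr)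
    (lt_min_iff.1 hax1).2 (by simp [add_comm]) (lt_min_iff.1 hax1).1
  exact key.const_add _

lemma deriv_psi {x : ℝ} (hx : 0 < x) : deriv psi x = trigammaSeries x := by
  have h : psi =ᶠ[𝓝 x] digammaSeries :=
    eventually_of_mem (isOpen_Ioi.mem_nhds hx) fun y hy => (hasDerivAt_log_Gamma hy).deriv
  rw [h.deriv_eq, (hasDerivAt_digammaSeries hx).deriv]

lemma one_div_add_one_sq_lt_one_div_sub_one_div {y : ℝ} (hy : 0 < y) :
    1 / (y + 1) ^ 2 < 1 / y - 1 / (y + 1) := by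
  rw [div_sub_div _ _ hy.ne' (by positivity), div_lt_div_iff₀ (by positivity) (by positivity)]
  nlinarith

lemma one_div_add_one_div_two_mul_sq_sub_lt_one_div_sq {y : ℝ} (hy : 0 < y) :
    (1 / y + 1 / (2 * y ^ 2)) - (1 / (y + 1) + 1 / (2 * (y + 1) ^ 2)) < 1 / y ^ 2 := by
  have : 0 < y + 1 := by linarith
  field_simp
  nlinarith

lemma trigammaSeries_lt {x : ℝ} (hx : 0 < x) : trigammaSeries x < 1 / x + 1 / x ^ 2 := by
  have hpos (n : ℕ) : 0 < x + n := by positivity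
  have htail : ∑' n : ℕ, 1 / (x + (n + 1 : ℕ)) ^ 2 < 1 / x := by
    have key := tsum_lt_of_lt_sub_succ (g := fun n : ℕ => 1 / (x + n))
      ((summable_nat_add_iff 1).2 (summable_one_div_add_sq x))
      (antitone_nat_of_succ_le fun n => by gcongr; simp)
      (tendsto_one_div_add_natCast x)
      (fun n => by simpa [add_assoc] using one_div_add_one_sq_lt_one_div_sub_one_div (hpos n))
    simpa using key
  rw [trigammaSeries, (summable_one_div_add_sq x).tsum_eq_zero_add]
  simp only [CharP.cast_eq_zero, add_zero] at htail ⊢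
  linarith

lemma lt_trigammaSeries {x : ℝ} (hx : 0 < x) : 1 / x + 1 / (2 * x ^ 2) < trigammaSeries x := by
  have hpos (n : ℕ) : 0 < x + n := by positivity
  have h0 := tendsto_one_div_add_natCast x
  have key := lt_tsum_of_sub_succ_lt (g := fun n : ℕ => 1 / (x + n) + 1 / (2 * (x + n) ^ 2))
    (summable_one_div_add_sq x)
    (antitone_nat_of_succ_le fun n => by gcongr <;> simp)
    (by simpa [div_eq_mul_inv] using h0.add ((h0.pow 2).div_const 2))
    (fun n => by
      simpa [add_assoc] using one_div_add_one_div_two_mul_sq_sub_lt_one_div_sq (hpos n))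
  simpa [trigammaSeries] using key

theorem trigamma_bounds (x : ℝ) (hx : 0 < x) :
    1 / x + 1 / (2 * x ^ 2) < deriv psi x ∧ deriv psi x < 1 / x + 1 / x ^ 2 := by
  rw [deriv_psi hx]
  exact ⟨lt_trigammaSeries hx, trigammaSeries_lt hx⟩
end

section
/- Let 0 ≤ α < β with β - α > 1. Then the function q_{α,β}(u) = (e^{-αu} - e^{-βu})/(1 - e^{-u}) for u ≠ 0, with q_{α,β}(0) = β - α, is logarithmically convex on all of ℝ, i.e., ln q_{α,β} is convex. -/
noncomputable def q (α β u : ℝ) : ℝ :=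
  if u = 0 then β - α else (Real.exp (-α * u) - Real.exp (-β * u)) / (1 - Real.exp (-u))

/-!
With `γ = β - α` and `c = (α + β - 1) / 2`, writing numerator and denominator through `sinh` gives
`q α β u = exp (-c u) * sinh (γ u / 2) / sinh (u / 2)`, so it suffices that
`L t = log (sinh (γ t) / sinh t)` is convex. Since `L` is even, it is enough that `L` is convex and
nondecreasing on `[0, ∞)`. For `t > 0`, `L' = γ coth (γ t) - coth t` and
`L'' = 1 / sinh² t - γ² / sinh² (γ t)`, and both are nonnegative for `γ > 1` because `sinh` is
superlinear on `[0, ∞)`.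
-/

open Real Set

namespace Real

theorem mul_sinh_le_sinh_mul {c x : ℝ} (hc : 1 ≤ c) (hx : 0 ≤ x) :
    c * sinh x ≤ sinh (c * x) := by
  have hmono : MonotoneOn (fun y => sinh (c * y) - c * sinh y) (Ici 0) := by
    refine monotoneOn_of_hasDerivWithinAt_nonneg (f' := fun y => c * (cosh (c * y) - cosh y))
      (convex_Ici 0) (by fun_prop) (fun y _ => ?_) (fun y hy => ?_)
    · have := ((hasDerivAt_sinh (c * y)).comp y ((hasDerivAt_id y).const_mul c)).sub
        ((hasDerivAt_sinh y).const_mul c)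
      exact (this.congr_deriv (by ring)).hasDerivWithinAt
    · rw [interior_Ici, mem_Ioi] at hy
      have : cosh y ≤ cosh (c * y) := by
        rw [cosh_le_cosh, abs_of_pos hy, abs_of_pos (by positivity)]
        nlinarith
      nlinarith
  simpa using hmono self_mem_Ici hx hx

theorem sinh_mul_cosh_le_mul_cosh_mul_sinh {γ t : ℝ} (hγ : 1 < γ) (ht : 0 ≤ t) :
    sinh (γ * t) * cosh t ≤ γ * cosh (γ * t) * sinh t := by
  -- superlinearity with ratio `(γ + 1) / (γ - 1)`, then expand `sinh (γ t ± t)`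
  have key : (γ + 1) * sinh ((γ - 1) * t) ≤ (γ - 1) * sinh ((γ + 1) * t) := by
    have hγ' : γ - 1 ≠ 0 := by linarith
    have h := mul_sinh_le_sinh_mul (c := (γ + 1) / (γ - 1)) (x := (γ - 1) * t)
      (by rw [le_div_iff₀ (by linarith)]; linarith) (by nlinarith)
    rw [show (γ + 1) / (γ - 1) * ((γ - 1) * t) = (γ + 1) * t by field_simp, div_mul_eq_mul_div,
      div_le_iff₀ (by linarith)] at h
    linarith
  rw [show (γ + 1) * t = γ * t + t by ring, show (γ - 1) * t = γ * t - t by ring,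
    sinh_add, sinh_sub] at key
  linarith

theorem hasDerivAt_log_sinh {x : ℝ} (hx : 0 < x) :
    HasDerivAt (fun x => log (sinh x)) (cosh x / sinh x) x :=
  (hasDerivAt_sinh x).log (sinh_pos_iff.2 hx).ne'

theorem hasDerivAt_cosh_div_sinh {x : ℝ} (hx : sinh x ≠ 0) :
    HasDerivAt (fun x => cosh x / sinh x) (-1 / sinh x ^ 2) x := by
  refine ((hasDerivAt_cosh x).div (hasDerivAt_sinh x) hx).congr_deriv ?_
  rw [← cosh_sq_sub_sinh_sq x]
  ring

theorem continuous_dslope_sinh : Continuous (dslope sinh 0) :=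
  continuousOn_univ.1 <| (continuousOn_dslope Filter.univ_mem).2
    ⟨continuous_sinh.continuousOn, differentiable_sinh 0⟩

theorem dslope_sinh_pos (x : ℝ) : 0 < dslope sinh 0 x := by
  rcases lt_trichotomy x 0 with hx | rfl | hx
  · rw [dslope_of_ne _ hx.ne, slope_def_field, sub_zero, sinh_zero, sub_zero]
    exact div_pos_of_neg_of_neg (sinh_neg_iff.2 hx) hx
  · simp [(hasDerivAt_sinh 0).deriv]
  · rw [dslope_of_ne _ hx.ne', slope_def_field, sub_zero, sinh_zero, sub_zero]
    exact div_pos (sinh_pos_iff.2 hx) hx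

end Real

theorem ConvexOn.of_even_of_monotoneOn_Ici {f : ℝ → ℝ} (heven : ∀ x, f (-x) = f x)
    (hconv : ConvexOn ℝ (Ici 0) f) (hmono : MonotoneOn f (Ici 0)) : ConvexOn ℝ univ f := by
  have himage : (|·|) '' univ = Ici (0 : ℝ) := by
    ext x
    exact ⟨fun ⟨y, _, hy⟩ => hy ▸ abs_nonneg y, fun hx => ⟨x, mem_univ x, abs_of_nonneg hx⟩⟩
  have hcomp := (himage ▸ hconv).comp (convexOn_univ_norm (E := ℝ)) (himage ▸ hmono)
  refine hcomp.congr fun x _ => ?_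
  rcases abs_choice x with h | h <;> simp only [Function.comp_apply, h, heven]

noncomputable def sinhRatio (γ t : ℝ) : ℝ :=
  if t = 0 then γ else sinh (γ * t) / sinh t

section sinhRatio

variable {γ t : ℝ}

theorem sinhRatio_eq_mul_dslope_div (hγ : γ ≠ 0) (t : ℝ) :
    sinhRatio γ t = γ * dslope sinh 0 (γ * t) / dslope sinh 0 t := by
  rcases eq_or_ne t 0 with rfl | ht
  · simp [sinhRatio, (hasDerivAt_sinh 0).deriv]
  · rw [sinhRatio, if_neg ht, dslope_of_ne _ ht, dslope_of_ne _ (mul_ne_zero hγ ht),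
      slope_def_field, slope_def_field]
    have hs : sinh t ≠ 0 := sinh_ne_zero.2 ht
    simp only [sinh_zero, sub_zero]
    field_simp

theorem continuous_sinhRatio (hγ : γ ≠ 0) : Continuous (sinhRatio γ) := by
  rw [funext (sinhRatio_eq_mul_dslope_div hγ)]
  exact (continuous_const.mul (continuous_dslope_sinh.comp (continuous_const_mul γ))).div
    continuous_dslope_sinh fun t => (dslope_sinh_pos t).ne'

theorem sinhRatio_pos (hγ : 0 < γ) (t : ℝ) : 0 < sinhRatio γ t := by
  rw [sinhRatio_eq_mul_dslope_div hγ.ne']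
  have := dslope_sinh_pos (γ * t)
  have := dslope_sinh_pos t
  positivity

theorem sinhRatio_neg (γ t : ℝ) : sinhRatio γ (-t) = sinhRatio γ t := by
  simp only [sinhRatio, neg_eq_zero, mul_neg, sinh_neg, neg_div_neg_eq]

theorem hasDerivAt_log_sinhRatio (hγ : 0 < γ) (ht : 0 < t) :
    HasDerivAt (fun t => log (sinhRatio γ t))
      (γ * (cosh (γ * t) / sinh (γ * t)) - cosh t / sinh t) t := by
  have hdiff := (((hasDerivAt_log_sinh (mul_pos hγ ht)).comp t
    ((hasDerivAt_id t).const_mul γ)).sub (hasDerivAt_log_sinh ht))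
  refine (hdiff.congr_deriv (by ring)).congr_of_eventuallyEq ?_
  filter_upwards [Ioi_mem_nhds ht] with s (hs : 0 < s)
  rw [sinhRatio, if_neg hs.ne', log_div (sinh_pos_iff.2 (mul_pos hγ hs)).ne'
    (sinh_pos_iff.2 hs).ne']
  rfl

theorem hasDerivAt_deriv_log_sinhRatio (hγ : 0 < γ) (ht : 0 < t) :
    HasDerivAt (fun t => γ * (cosh (γ * t) / sinh (γ * t)) - cosh t / sinh t)
      (1 / sinh t ^ 2 - γ ^ 2 / sinh (γ * t) ^ 2) t := by
  have h := (((hasDerivAt_cosh_div_sinh (sinh_pos_iff.2 (mul_pos hγ ht)).ne').comp t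
    ((hasDerivAt_id t).const_mul γ)).const_mul γ).sub
      (hasDerivAt_cosh_div_sinh (sinh_pos_iff.2 ht).ne')
  exact h.congr_deriv (by ring)

theorem convexOn_log_sinhRatio_Ici (hγ : 1 < γ) :
    ConvexOn ℝ (Ici 0) (fun t => log (sinhRatio γ t)) := by
  have hγ0 : 0 < γ := zero_lt_one.trans hγ
  refine convexOn_of_hasDerivWithinAt2_nonneg (convex_Ici 0)
    (f' := fun t => γ * (cosh (γ * t) / sinh (γ * t)) - cosh t / sinh t)
    (f'' := fun t => 1 / sinh t ^ 2 - γ ^ 2 / sinh (γ * t) ^ 2)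
    ((continuous_sinhRatio hγ0.ne').continuousOn.log fun t _ => (sinhRatio_pos hγ0 t).ne')
    (fun t ht => ?_) (fun t ht => ?_) (fun t ht => ?_) <;> simp only [interior_Ici, mem_Ioi] at ht ⊢
  · exact (hasDerivAt_log_sinhRatio hγ0 ht).hasDerivWithinAt
  · exact (hasDerivAt_deriv_log_sinhRatio hγ0 ht).hasDerivWithinAt
  · have hs : 0 < sinh t := sinh_pos_iff.2 ht
    have h : γ / sinh (γ * t) ≤ 1 / sinh t := by
      rw [div_le_div_iff₀ (sinh_pos_iff.2 (mul_pos hγ0 ht)) hs, one_mul]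
      exact mul_sinh_le_sinh_mul hγ.le ht.le
    rw [sub_nonneg, ← div_pow, ← one_div_pow]
    exact pow_le_pow_left₀ (by positivity) h 2

theorem monotoneOn_log_sinhRatio_Ici (hγ : 1 < γ) :
    MonotoneOn (fun t => log (sinhRatio γ t)) (Ici 0) := by
  have hγ0 : 0 < γ := zero_lt_one.trans hγ
  refine monotoneOn_of_hasDerivWithinAt_nonneg (convex_Ici 0)
    (f' := fun t => γ * (cosh (γ * t) / sinh (γ * t)) - cosh t / sinh t)
    ((continuous_sinhRatio hγ0.ne').continuousOn.log fun t _ => (sinhRatio_pos hγ0 t).ne')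
    (fun t ht => ?_) (fun t ht => ?_) <;> simp only [interior_Ici, mem_Ioi] at ht ⊢
  · exact (hasDerivAt_log_sinhRatio hγ0 ht).hasDerivWithinAt
  · rw [sub_nonneg, ← mul_div_assoc, div_le_div_iff₀ (sinh_pos_iff.2 ht)
      (sinh_pos_iff.2 (mul_pos hγ0 ht))]
    linarith [sinh_mul_cosh_le_mul_cosh_mul_sinh hγ ht.le]

end sinhRatio

theorem convexOn_log_sinhRatio {γ : ℝ} (hγ : 1 < γ) :
    ConvexOn ℝ univ (fun t => log (sinhRatio γ t)) :=
  .of_even_of_monotoneOn_Ici (fun t => by rw [sinhRatio_neg]) (convexOn_log_sinhRatio_Ici hγ)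
    (monotoneOn_log_sinhRatio_Ici hγ)

theorem q_eq_exp_mul_sinhRatio (α β u : ℝ) :
    q α β u = exp (-((α + β - 1) / 2) * u) * sinhRatio (β - α) (u / 2) := by
  rcases eq_or_ne u 0 with rfl | hu
  · simp [q, sinhRatio]
  have hnum : exp (-((α + β - 1) / 2) * u) * (exp ((β - α) * (u / 2)) - exp (-((β - α) * (u / 2))))
      = exp (u / 2) * (exp (-α * u) - exp (-β * u)) := by
    simp only [mul_sub, ← exp_add]
    ring_nf
  have hden : exp (u / 2) - exp (-(u / 2)) = exp (u / 2) * (1 - exp (-u)) := by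
    simp only [mul_sub, ← exp_add, mul_one]
    ring_nf
  rw [q, sinhRatio, if_neg hu, if_neg (div_ne_zero hu two_ne_zero), sinh_eq, sinh_eq,
    div_div_div_cancel_right₀ two_ne_zero, mul_div_assoc', hnum, hden,
    mul_div_mul_left _ _ (exp_ne_zero _)]

theorem q_log_convex_general (α β : ℝ) (h1 : 1 < β - α) :
    ConvexOn ℝ Set.univ (fun u => Real.log (q α β u)) := by
  have hγ : 0 < β - α := zero_lt_one.trans h1
  have hlog : (fun u => log (q α β u)) =
      fun u => -((α + β - 1) / 2) * u + log (sinhRatio (β - α) (u / 2)) := by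
    funext u
    rw [q_eq_exp_mul_sinhRatio, log_mul (exp_pos _).ne' (sinhRatio_pos hγ _).ne', log_exp]
  have hhalf : ConvexOn ℝ univ fun u => log (sinhRatio (β - α) (u / 2)) :=
    (convexOn_log_sinhRatio h1).comp_linearMap (LinearMap.mulRight ℝ (2⁻¹ : ℝ))
  rw [hlog]
  exact ((LinearMap.mulLeft ℝ _).convexOn convex_univ).add hhalf

theorem q_log_convex (α β : ℝ) (hα : 0 ≤ α) (hαβ : α < β) (h1 : 1 < β - α) :
    ConvexOn ℝ Set.univ (fun u => Real.log (q α β u)) :=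
  q_log_convex_general α β h1
end
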